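/- The set of pairs {(8ad − 6, 8(ad)² − 20(ad) + 4(a³b + cd³) + 12) : a, b, c, d ∈ ℤ with ad − bc = 1} is Zariski-dense in the affine plane over ℂ; that is, for every nonzero polynomial F ∈ ℂ[x,y] there exist integers a, b, c, d with ad − bc = 1 such that F(8ad − 6, 8(ad)² − 20(ad) + 4(a³b + cd³) + 12) ≠ 0. -/
import Mathlib

open MvPolynomial

lemma poly_zero_of_int (p : Polynomial ℂ) (h : ∀ n : ℤ, p.eval (n : ℂ) = 0) : p = 0 := by
  apply p.eq_zero_of_infinite_isRoot
  apply Set.Infinite.mono (s := Set.range (Int.cast : ℤ → ℂ))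
  · rintro x ⟨n, rfl⟩; exact h n
  · exact Set.infinite_range_of_injective Int.cast_injective

lemma poly_zero_of_cofin (p : Polynomial ℂ)
    (h : ∀ s : ℂ, s ≠ 2 → s ≠ -6 → p.eval s = 0) : p = 0 := by
  apply p.eq_zero_of_infinite_isRoot
  apply Set.Infinite.mono (s := ({2, -6} : Set ℂ)ᶜ)
  · rintro x hx
    simp only [Set.mem_compl_iff, Set.mem_insert_iff, Set.mem_singleton_iff, not_or] at hx
    exact h x hx.1 hx.2
  · exact Set.Finite.infinite_compl (Set.toFinite _)

lemma mv_aeval_eq_eval (f : Fin 2 → ℂ) (G : MvPolynomial (Fin 2) ℂ) :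
    MvPolynomial.aeval f G = MvPolynomial.eval f G := by
  rw [MvPolynomial.aeval_eq_eval₂Hom]
  rfl

lemma spec_eval (G : MvPolynomial (Fin 2) ℂ) (p q : Polynomial ℂ) (t : ℂ) :
    Polynomial.eval t (MvPolynomial.aeval ![p, q] G)
      = MvPolynomial.eval ![p.eval t, q.eval t] G := by
  have h1 : Polynomial.eval t ((MvPolynomial.aeval ![p, q]) G)
      = (Polynomial.aeval t) ((MvPolynomial.aeval ![p, q]) G) := by
    rw [Polynomial.coe_aeval_eq_eval]
  rw [h1, MvPolynomial.comp_aeval_apply, mv_aeval_eq_eval]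
  have h2 : (fun i => (Polynomial.aeval t) (![p, q] i))
      = ![Polynomial.eval t p, Polynomial.eval t q] := by
    funext i; fin_cases i <;> simp [Polynomial.coe_aeval_eq_eval]
  rw [h2]

lemma mv_zero_on_C2_of_int (G : MvPolynomial (Fin 2) ℂ)
    (h : ∀ m n : ℤ, MvPolynomial.eval ![(m : ℂ), (n : ℂ)] G = 0) (u v : ℂ) :
    MvPolynomial.eval ![u, v] G = 0 := by
  have step1 : ∀ (m : ℤ) (t : ℂ), MvPolynomial.eval ![(m : ℂ), t] G = 0 := by
    intro m t
    have hq : (MvPolynomial.aeval ![Polynomial.C (m : ℂ), Polynomial.X] G) = 0 := by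
      apply poly_zero_of_int
      intro n
      rw [spec_eval]
      simpa using h m n
    have h2 := spec_eval G (Polynomial.C (m : ℂ)) Polynomial.X t
    rw [hq] at h2
    simpa using h2.symm
  have hq : (MvPolynomial.aeval ![Polynomial.X, Polynomial.C v] G) = 0 := by
    apply poly_zero_of_int
    intro m
    rw [spec_eval]
    simpa using step1 m v
  have h2 := spec_eval G Polynomial.X (Polynomial.C v) u
  rw [hq] at h2
  simpa using h2.symm

lemma mv_zero_of_cofin (G : MvPolynomial (Fin 2) ℂ)
    (h : ∀ s t : ℂ, s ≠ 2 → s ≠ -6 → MvPolynomial.eval ![s, t] G = 0) : G = 0 := by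
  have hall : ∀ s t : ℂ, MvPolynomial.eval ![s, t] G = 0 := by
    intro s t
    have hq : (MvPolynomial.aeval ![Polynomial.X, Polynomial.C t] G) = 0 := by
      apply poly_zero_of_cofin
      intro s hs1 hs2
      rw [spec_eval]
      simpa using h s t hs1 hs2
    have h2 := spec_eval G Polynomial.X (Polynomial.C t) s
    rw [hq] at h2
    simpa using h2.symm
  apply MvPolynomial.funext
  intro x
  have hx : x = ![x 0, x 1] := by
    funext i; fin_cases i <;> rfl
  rw [hx, hall]
  simp

lemma quad_root (w T : ℂ) (hw0 : w ≠ 0) (hw1 : w - 1 ≠ 0) :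
    ∃ z : ℂ, z ≠ 0 ∧ 4 * (w - 1) * z ^ 2 - T * z + 4 * w ^ 3 = 0 := by
  obtain ⟨z, hz⟩ := IsAlgClosed.exists_root
    (Polynomial.C (4 * (w - 1)) * Polynomial.X ^ 2 + Polynomial.C (-T) * Polynomial.X
      + Polynomial.C (4 * w ^ 3))
    (by rw [Polynomial.degree_quadratic (by simpa using hw1)]; norm_num)
  have hz' : 4 * (w - 1) * z ^ 2 - T * z + 4 * w ^ 3 = 0 := by
    have := hz
    simp only [Polynomial.IsRoot, Polynomial.eval_add, Polynomial.eval_mul, Polynomial.eval_pow,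
      Polynomial.eval_C, Polynomial.eval_X] at this
    linear_combination this
  refine ⟨z, ?_, hz'⟩
  intro hcon
  rw [hcon] at hz'
  have h3 : w ^ 3 = 0 := by linear_combination (1/4 : ℂ) * hz'
  exact hw0 (pow_eq_zero_iff (n := 3) (by norm_num) |>.mp h3)

/-- Surjectivity of the parametrized family off two vertical lines. -/
lemma param_surj (s t : ℂ) (hs1 : s ≠ 2) (hs2 : s ≠ -6) :
    ∃ u v : ℂ, 8 * (u * v) - 6 = s ∧
      8 * (u * v) ^ 2 - 20 * (u * v) + 4 * (u ^ 3 * (u * v - 1) + v ^ 3) + 12 = t := by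
  obtain ⟨w, rfl⟩ : ∃ w : ℂ, s = 8 * w - 6 := ⟨(s + 6) / 8, by ring⟩
  have hw1 : w - 1 ≠ 0 := by
    intro h; apply hs1
    have : w = 1 := by linear_combination h
    rw [this]; norm_num
  have hw0 : w ≠ 0 := by
    intro h; apply hs2; rw [h]; norm_num
  obtain ⟨T, rfl⟩ : ∃ T : ℂ, t = 8 * w ^ 2 - 20 * w + 12 + T :=
    ⟨t - (8 * w ^ 2 - 20 * w + 12), by ring⟩
  obtain ⟨z, hz0, hzq⟩ := quad_root w T hw0 hw1
  obtain ⟨u, hu⟩ := IsAlgClosed.exists_pow_nat_eq (k := ℂ) z (by norm_num : 0 < 3)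
  have hu0 : u ≠ 0 := by
    intro hcon; rw [hcon] at hu; simp at hu; exact hz0 hu.symm
  refine ⟨u, w / u, by field_simp, ?_⟩
  have huv : u * (w / u) = w := by field_simp
  rw [huv]
  have hv3 : (w / u) ^ 3 = w ^ 3 / z := by rw [div_pow, hu]
  rw [hv3, hu]
  field_simp
  linear_combination hzq

/-- The set of pairs
`(8ad − 6, 8(ad)² − 20(ad) + 4(a³b + cd³) + 12)` for integers `a, b, c, d` with
`ad − bc = 1` is Zariski-dense in the affine plane over `ℂ`: no nonzero polynomial
`F ∈ ℂ[x,y]` vanishes identically on it. -/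
theorem zariski_dense_cpnf_good_reduction
    (F : MvPolynomial (Fin 2) ℂ) (hF : F ≠ 0) :
    ∃ a b c d : ℤ, a * d - b * c = 1 ∧
      MvPolynomial.eval
        ![8 * ((a : ℂ) * d) - 6,
          8 * ((a : ℂ) * d) ^ 2 - 20 * ((a : ℂ) * d)
            + 4 * ((a : ℂ) ^ 3 * (b : ℂ) + (c : ℂ) * (d : ℂ) ^ 3) + 12] F ≠ 0 := by
  by_contra hcon
  push_neg at hcon
  -- the substituted polynomial family: a = u, d = v, c = 1, b = uv - 1
  set P : MvPolynomial (Fin 2) ℂ := 8 * (X 0 * X 1) - 6 with hP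
  set Q : MvPolynomial (Fin 2) ℂ :=
    8 * (X 0 * X 1) ^ 2 - 20 * (X 0 * X 1)
      + 4 * ((X 0) ^ 3 * (X 0 * X 1 - 1) + (X 1) ^ 3) + 12 with hQ
  set G : MvPolynomial (Fin 2) ℂ := MvPolynomial.aeval ![P, Q] F with hG
  have hGeval : ∀ u v : ℂ, MvPolynomial.eval ![u, v] G =
      MvPolynomial.eval ![8 * (u * v) - 6,
        8 * (u * v) ^ 2 - 20 * (u * v) + 4 * (u ^ 3 * (u * v - 1) + v ^ 3) + 12] F := by
    intro u v
    rw [hG, ← mv_aeval_eq_eval, MvPolynomial.comp_aeval_apply, mv_aeval_eq_eval]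
    have h2 : (fun i => (MvPolynomial.aeval ![u, v]) (![P, Q] i))
        = ![8 * (u * v) - 6,
            8 * (u * v) ^ 2 - 20 * (u * v) + 4 * (u ^ 3 * (u * v - 1) + v ^ 3) + 12] := by
      funext i; fin_cases i <;> simp [hP, hQ]
    rw [h2]
  have hGint : ∀ m n : ℤ, MvPolynomial.eval ![(m : ℂ), (n : ℂ)] G = 0 := by
    intro m n
    rw [hGeval]
    have h1 := hcon m (m * n - 1) 1 n (by ring)
    push_cast at h1
    convert h1 using 4 <;> push_cast <;> ring
  have hGC : ∀ u v : ℂ, MvPolynomial.eval ![u, v] G = 0 := mv_zero_on_C2_of_int G hGint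
  have hF0 : F = 0 := by
    apply mv_zero_of_cofin
    intro s t hs1 hs2
    obtain ⟨u, v, h1, h2⟩ := param_surj s t hs1 hs2
    have h3 := hGC u v
    rw [hGeval] at h3
    rw [← h1, ← h2]
    exact h3
  exact hF hF0
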